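/- Let n, r, d, a be positive integers, s := d²n − ra, k := gcd(r,d), and (r', d') integers with rd' − r'd = −k and 0 ≤ r' < r. Assume dn > max{(1/(2k))(r' + (k−1)r/k)·2s, s}. Then: for any integers r₁, d₁, a₁ with a₁ > 0, 0 < d₁ < d, d₁/a₁ ≤ d/a, and 2d₁²n − 2r₁a₁ ≥ 0 (i.e. ⟨(a₁, ±d₁H, r₁)²⟩ ≥ 0), one has r₁ ≤ rd₁/d. -/

import Mathlib

/-!
Write `e = r₁d − rd₁`. Combining `d₁/a₁ ≤ d/a` with `r₁a₁ ≤ d₁²n` gives `r₁a ≤ dd₁n`, which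
rearranges to `e·dn ≤ r₁s`. If `e > 0`, then `k ∣ e`, say `e = km` with `m ≥ 1`. Since
`dn > s`, this forces `r₁ < r`; and `rd' − r'd = −k` gives `r₁ ≡ mr' (mod r/k)`, so
`r₁ ≤ mr' + (k − 1)r/k ≤ m(r' + (k − 1)r/k)`. Then `r₁s < km·dn = e·dn`, a contradiction.
-/

lemma mul_le_of_slope_le_of_mukai {n d d₁ a a₁ r₁ : ℤ} (hd : 0 ≤ d) (hd₁ : 0 < d₁)
    (hr₁ : 0 ≤ r₁) (hslope : d₁ * a ≤ d * a₁) (hmukai : r₁ * a₁ ≤ d₁ ^ 2 * n) :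
    r₁ * a ≤ d * d₁ * n := by
  have : d₁ * (r₁ * a) ≤ d₁ * (d * d₁ * n) :=
    calc d₁ * (r₁ * a) = r₁ * (d₁ * a) := by ring
      _ ≤ r₁ * (d * a₁) := mul_le_mul_of_nonneg_left hslope hr₁
      _ = d * (r₁ * a₁) := by ring
      _ ≤ d * (d₁ ^ 2 * n) := mul_le_mul_of_nonneg_left hmukai hd
      _ = d₁ * (d * d₁ * n) := by ring
  exact le_of_mul_le_mul_left this hd₁

lemma sub_mul_le_mul_of_mul_le {n r d a s r₁ d₁ : ℤ} (hr : 0 ≤ r)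
    (hs : s = d ^ 2 * n - r * a)
    (h : r₁ * a ≤ d * d₁ * n) : (r₁ * d - r * d₁) * (d * n) ≤ r₁ * s := by
  have := mul_nonneg hr (sub_nonneg.2 h)
  rw [hs]
  linarith

lemma lt_of_sub_mul_le_mul {r d r₁ d₁ s D : ℤ} (hr₁ : 0 < r₁) (hd₁ : 0 ≤ d₁) (hd₁d : d₁ < d)
    (hD : 0 ≤ D) (hsD : s < D) (h : (r₁ * d - r * d₁) * D ≤ r₁ * s) : r₁ < r := by
  by_contra! hrr₁
  have hle : r₁ ≤ r₁ * d - r * d₁ := by nlinarith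
  nlinarith [mul_le_mul_of_nonneg_right hle hD]

lemma dvd_sub_mul_of_sub_eq {k r₀ r d r' d' r₁ d₁ m : ℤ} (hk : k ≠ 0) (hr : r = k * r₀)
    (hrd : r * d' - r' * d = -k) (hm : r₁ * d - r * d₁ = k * m) : r₀ ∣ r₁ - m * r' := by
  refine ⟨d₁ * r' - r₁ * d', mul_left_cancel₀ hk ?_⟩
  subst hr
  linear_combination r' * hm + r₁ * hrd

lemma le_sub_one_mul_of_dvd_of_lt {b x c : ℤ} (hb : 0 < b) (hdvd : b ∣ x) (hlt : x < c * b) :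
    x ≤ (c - 1) * b := by
  obtain ⟨t, rfl⟩ := hdvd
  have : t < c := lt_of_mul_lt_mul_left (by linarith) hb.le
  nlinarith

lemma key_special_int {n r d a s k r₀ r' d' r₁ d₁ a₁ : ℤ} (hd : 0 < d)
    (hn : 0 < n) (hr : 0 < r) (hs : s = d ^ 2 * n - r * a) (hk : 0 < k)
    (hkr : r = k * r₀) (hkd : k ∣ d) (hrd : r * d' - r' * d = -k) (hr'0 : 0 ≤ r')
    (hbig₁ : (r' + (k - 1) * r₀) * s < d * n * k) (hbig₂ : s < d * n)
    (hd₁ : 0 < d₁) (hd₁d : d₁ < d) (hslope : d₁ * a ≤ d * a₁)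
    (hmukai : r₁ * a₁ ≤ d₁ ^ 2 * n) :
    r₁ * d ≤ r * d₁ := by
  by_contra! hlt
  have hr₀ : 0 < r₀ := pos_of_mul_pos_right (hkr ▸ hr) hk.le
  have hr₁ : 0 < r₁ := pos_of_mul_pos_left (by nlinarith) hd.le
  obtain ⟨m, hm⟩ : k ∣ r₁ * d - r * d₁ :=
    dvd_sub (hkd.mul_left r₁) (hkr ▸ dvd_mul_of_dvd_left (dvd_mul_right k r₀) d₁)
  have hm0 : 0 < m := pos_of_mul_pos_right (hm ▸ sub_pos.2 hlt) hk.le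
  have hdn : 0 < d * n := mul_pos hd hn
  have hexcess : (r₁ * d - r * d₁) * (d * n) ≤ r₁ * s :=
    sub_mul_le_mul_of_mul_le hr.le hs
      (mul_le_of_slope_le_of_mukai hd.le hd₁ hr₁.le hslope hmukai)
  have hr₁r : r₁ < r := lt_of_sub_mul_le_mul hr₁ hd₁.le hd₁d hdn.le hbig₂ hexcess
  have hspos : 0 < s :=
    pos_of_mul_pos_right ((mul_pos (sub_pos.2 hlt) hdn).trans_le hexcess) hr₁.le
  have hres : r₁ - m * r' ≤ (k - 1) * r₀ :=
    le_sub_one_mul_of_dvd_of_lt hr₀ (dvd_sub_mul_of_sub_eq hk.ne' hkr hrd hm)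
      (by nlinarith [mul_nonneg hm0.le hr'0])
  have hr₁m : r₁ ≤ m * (r' + (k - 1) * r₀) := by
    have : 0 ≤ (m - 1) * ((k - 1) * r₀) :=
      mul_nonneg (by omega) (mul_nonneg (by omega) hr₀.le)
    nlinarith
  have := calc
    r₁ * s ≤ m * (r' + (k - 1) * r₀) * s := mul_le_mul_of_nonneg_right hr₁m hspos.le
    _ < m * (d * n * k) := by rw [mul_assoc]; exact mul_lt_mul_of_pos_left hbig₁ hm0
    _ = (r₁ * d - r * d₁) * (d * n) := by rw [hm]; ring
  linarith

lemma mul_lt_of_rat_lt {k r r₀ r' s D : ℤ} (hk : 0 < k) (hr : r = k * r₀)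
    (h : (1 / (2 * (k : ℚ))) * ((r' : ℚ) + ((k : ℚ) - 1) * (r : ℚ) / (k : ℚ)) * (2 * (s : ℚ))
      < D) :
    (r' + (k - 1) * r₀) * s < D * k := by
  have hkQ : (0 : ℚ) < k := by exact_mod_cast hk
  have heq : (1 / (2 * (k : ℚ))) * ((r' : ℚ) + ((k : ℚ) - 1) * (r : ℚ) / (k : ℚ)) * (2 * (s : ℚ))
      = ((r' + (k - 1) * r₀) * s : ℤ) / k := by
    rw [hr]; push_cast; field_simp
  rw [heq, div_lt_iff₀ hkQ] at h
  exact_mod_cast h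

theorem key_special_general (n r d a : ℤ) (hn : 0 < n) (hr : 0 < r) (hd : 0 < d)
    (ha : 0 < a) (s : ℤ) (hs : s = d ^ 2 * n - r * a)
    (k : ℤ) (hk : k = Int.gcd r d)
    (r' d' : ℤ) (hrd : r * d' - r' * d = -k) (hr'0 : 0 ≤ r')
    (hbig : ((d * n : ℤ) : ℚ) >
      max ((1 / (2 * (k : ℚ))) * ((r' : ℚ) + ((k : ℚ) - 1) * (r : ℚ) / (k : ℚ))
        * (2 * (s : ℚ))) ((s : ℚ))) :
    ∀ r₁ d₁ a₁ : ℤ, 0 < a₁ → 0 < d₁ → d₁ < d →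
      (d₁ : ℚ) / (a₁ : ℚ) ≤ (d : ℚ) / (a : ℚ) →
      0 ≤ 2 * d₁ ^ 2 * n - 2 * r₁ * a₁ →
      (r₁ : ℚ) ≤ (r : ℚ) * (d₁ : ℚ) / (d : ℚ) := by
  intro r₁ d₁ a₁ ha₁ hd₁ hd₁d hslope hmukai
  have hk0 : 0 < k := hk ▸ Int.natCast_pos.2 (Int.gcd_pos_of_ne_zero_left d hr.ne')
  obtain ⟨r₀, hr₀⟩ : k ∣ r := hk ▸ Int.gcd_dvd_left r d
  obtain ⟨hbig₁, hbig₂⟩ := max_lt_iff.mp hbig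
  rw [div_le_div_iff₀ (by exact_mod_cast ha₁) (by exact_mod_cast ha)] at hslope
  rw [le_div_iff₀ (by exact_mod_cast hd)]
  exact_mod_cast key_special_int hd hn hr hs hk0 hr₀ (hk ▸ Int.gcd_dvd_right r d) hrd hr'0
    (mul_lt_of_rat_lt hk0 hr₀ hbig₁) (by exact_mod_cast hbig₂) hd₁ hd₁d
    (by exact_mod_cast hslope) (by linarith)

/-- Proposition 5.7(1): on an abelian surface with `NS(X) = ℤH`,
`(H²) = 2n`, set `s = d²n − ra`, `k = gcd(r,d)`, and take `(r',d')` with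
`rd' − r'd = −k`, `0 ≤ r' < r`.  If
`dn > max{(1/(2k))(r' + (k−1)r/k)·2s, s}`, then any stable-type Mukai
vector `(a₁, ±d₁H, r₁)` (i.e. with `2d₁²n − 2r₁a₁ ≥ 0`) with `a₁ > 0`,
`0 < d₁ < d` and `d₁/a₁ ≤ d/a` satisfies `r₁ ≤ rd₁/d`. -/
theorem key_special (n r d a : ℤ) (hn : 0 < n) (hr : 0 < r) (hd : 0 < d)
    (ha : 0 < a) (s : ℤ) (hs : s = d ^ 2 * n - r * a)
    (k : ℤ) (hk : k = Int.gcd r d)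
    (r' d' : ℤ) (hrd : r * d' - r' * d = -k) (hr'0 : 0 ≤ r') (hr' : r' < r)
    (hbig : ((d * n : ℤ) : ℚ) >
      max ((1 / (2 * (k : ℚ))) * ((r' : ℚ) + ((k : ℚ) - 1) * (r : ℚ) / (k : ℚ))
        * (2 * (s : ℚ))) ((s : ℚ))) :
    ∀ r₁ d₁ a₁ : ℤ, 0 < a₁ → 0 < d₁ → d₁ < d →
      (d₁ : ℚ) / (a₁ : ℚ) ≤ (d : ℚ) / (a : ℚ) →
      0 ≤ 2 * d₁ ^ 2 * n - 2 * r₁ * a₁ →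
      (r₁ : ℚ) ≤ (r : ℚ) * (d₁ : ℚ) / (d : ℚ) :=
  key_special_general n r d a hn hr hd ha s hs k hk r' d' hrd hr'0 hbig
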